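/- arXiv:2109.14509 — 3 statements merged into one kernel-verified Lean document; each statement's English description precedes it below -/
import Mathlib

section
/- Let (Ω, 𝒜) be a measurable space, μ a probability measure on Ω, β > 0, and f : Ω → ℝ a bounded measurable function. Set Z = ∫ exp(−f/β) dμ and let ρ be the probability measure with density dρ/dμ = Z⁻¹ exp(−f/β). Then the minimum value of the functional ν ↦ ∫ f dν + β·KL(ν‖μ), attained at ν = ρ, equals −β·log Z, i.e., ∫ f dρ + β·KL(ρ‖μ) = −β·log ∫ exp(−f/β) dμ. -/
open MeasureTheory Real Classical

/-- The Kullback–Leibler divergence `KL(ν‖μ)`, equal to `∫ log (dν/dμ) dν` when `ν ≪ μ`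
(and the log-likelihood ratio is integrable), and `+∞` otherwise. -/
noncomputable def klDiv {Ω : Type*} [MeasurableSpace Ω] (ν μ : Measure Ω) : EReal :=
  if ν ≪ μ ∧ Integrable (llr ν μ) ν then ((∫ ω, llr ν μ ω ∂ν : ℝ) : EReal) else ⊤

/-!
The Gibbs measure `ρ` is the exponential tilt `μ.tilted g` of `μ` by `g = -f/β`, whose
log-density is `g - log Z`. Hence `KL(ρ‖μ) = ∫ g dρ - log Z = -(∫ f dρ)/β - log Z`, and the
energy term `∫ f dρ` cancels against `β · KL(ρ‖μ)`.
-/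

lemma llr_tilted_self_ae_eq {Ω : Type*} [MeasurableSpace Ω] {μ : Measure Ω} [SigmaFinite μ]
    {g : Ω → ℝ} (hg : Integrable (fun x ↦ exp (g x)) μ) :
    llr (μ.tilted g) μ =ᵐ[μ.tilted g] fun x ↦ g x - log (∫ x, exp (g x) ∂μ) :=
  (tilted_absolutelyContinuous μ g).ae_le (log_rnDeriv_tilted_left_self hg)

lemma klDiv_tilted_self {Ω : Type*} [MeasurableSpace Ω] {μ : Measure Ω} [SigmaFinite μ]
    [NeZero μ] {g : Ω → ℝ} (hg : Integrable (fun x ↦ exp (g x)) μ)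
    (hg_tilted : Integrable g (μ.tilted g)) :
    klDiv (μ.tilted g) μ = ((∫ x, g x ∂μ.tilted g - log (∫ x, exp (g x) ∂μ) : ℝ) : EReal) := by
  have := isProbabilityMeasure_tilted hg
  have hllr := llr_tilted_self_ae_eq hg
  have hllr_int : Integrable (llr (μ.tilted g) μ) (μ.tilted g) :=
    (hg_tilted.sub (integrable_const _)).congr hllr.symm
  rw [klDiv, if_pos ⟨tilted_absolutelyContinuous μ g, hllr_int⟩, integral_congr_ae hllr,
    integral_sub hg_tilted (integrable_const _), integral_const, probReal_univ, smul_eq_mul,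
    one_mul]

lemma integrable_exp_of_abs_le {Ω : Type*} [MeasurableSpace Ω] {μ : Measure Ω}
    [IsFiniteMeasure μ] {g : Ω → ℝ} (hg : Measurable g) {C : ℝ} (hC : ∀ ω, |g ω| ≤ C) :
    Integrable (fun ω ↦ exp (g ω)) μ :=
  Integrable.of_bound hg.exp.aestronglyMeasurable (exp C) <| ae_of_all _ fun ω ↦ by
    rw [norm_of_nonneg (exp_pos _).le, exp_le_exp]
    exact (le_abs_self _).trans (hC ω)

/-- The minimum value of `ν ↦ ∫ f dν + β·KL(ν‖μ)`, attained at the Gibbs measure `ρ` with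
density `Z⁻¹ exp(−f/β)` with respect to `μ`, equals the free energy `−β·log Z`. -/
theorem gibbs_free_energy_value {Ω : Type*} [MeasurableSpace Ω]
    (μ : Measure Ω) [IsProbabilityMeasure μ]
    (β : ℝ) (hβ : 0 < β)
    (f : Ω → ℝ) (hf : Measurable f) (C : ℝ) (hC : ∀ ω, |f ω| ≤ C)
    (Z : ℝ) (hZ : Z = ∫ ω, exp (-f ω / β) ∂μ)
    (ρ : Measure Ω)
    (hρ : ρ = μ.withDensity fun ω => ENNReal.ofReal (Z⁻¹ * exp (-f ω / β))) :
    ((∫ ω, f ω ∂ρ : ℝ) : EReal) + (β : EReal) * klDiv ρ μ =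
      ((-β * Real.log (∫ ω, exp (-f ω / β) ∂μ) : ℝ) : EReal) := by
  have hρ_tilted : ρ = μ.tilted fun ω ↦ -f ω / β := by
    rw [hρ, hZ, Measure.tilted]
    congr with ω
    rw [inv_mul_eq_div]
  have hexp : Integrable (fun ω ↦ exp (-f ω / β)) μ := by
    refine integrable_exp_of_abs_le (hf.neg.div_const β) (C := C / β) fun ω ↦ ?_
    rw [abs_div, abs_neg, abs_of_pos hβ]
    exact div_le_div_of_nonneg_right (hC ω) hβ.le
  subst hρ_tilted
  have := isProbabilityMeasure_tilted hexp
  have hf_int : Integrable f (μ.tilted fun ω ↦ -f ω / β) :=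
    Integrable.of_bound hf.aestronglyMeasurable C (ae_of_all _ hC)
  rw [klDiv_tilted_self hexp (hf_int.neg.div_const β), integral_div, integral_neg,
    ← EReal.coe_mul, ← EReal.coe_add, EReal.coe_eq_coe_iff]
  field_simp
  ring
end

section
/- Let (Ω, 𝒜) be a measurable space, μ a probability measure on Ω, β > 0, and f : Ω → ℝ a bounded measurable function. Set Z = ∫ exp(−f/β) dμ and let ρ be the probability measure with density dρ/dμ = Z⁻¹ exp(−f/β). If a probability measure ν with ν ≪ μ satisfies ∫ f dν + β·KL(ν‖μ) = ∫ f dρ + β·KL(ρ‖μ), then ν = ρ. -/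
open MeasureTheory Real Classical

/-- If `ν ≪ ρ` are probability measures and `KL(ν‖ρ) = 0` then `ν = ρ`. -/
lemma eq_of_integral_llr_eq_zero {Ω : Type*} [MeasurableSpace Ω]
    (ρ ν : Measure Ω) [IsProbabilityMeasure ρ] [IsProbabilityMeasure ν]
    (hνρ : ν ≪ ρ) (hint : Integrable (llr ν ρ) ν)
    (hzero : ∫ x, llr ν ρ x ∂ν = 0) : ν = ρ := by
  set d : Ω → ENNReal := ν.rnDeriv ρ with hd
  have hdm : Measurable d := ν.measurable_rnDeriv ρ
  have hms : MeasurableSet {x | d x ≠ 0} := (hdm (measurableSet_singleton 0)).compl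
  have hpos : ∀ᵐ x ∂ν, 0 < d x := Measure.rnDeriv_pos hνρ
  have hlt : ∀ᵐ x ∂ν, d x < ⊤ := hνρ.ae_le (ν.rnDeriv_lt_top ρ)
  have hwd : ρ.withDensity d = ν := ν.withDensity_rnDeriv_eq ρ hνρ
  have hL : ∫⁻ x, (d x)⁻¹ ∂ν = ρ {x | d x ≠ 0} := by
    rw [← hwd, lintegral_withDensity_eq_lintegral_mul _ hdm (by fun_prop)]
    have h1 : ∀ᵐ x ∂ρ, (d * fun x => (d x)⁻¹) x = {x | d x ≠ 0}.indicator 1 x := by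
      filter_upwards [ν.rnDeriv_lt_top ρ] with x hx
      by_cases h0 : d x = 0
      · simp [Set.indicator_apply, h0]
      · simp [Set.indicator_apply, h0, ENNReal.mul_inv_cancel h0 hx.ne]
    rw [lintegral_congr_ae h1, lintegral_indicator_one hms]
  have hLle : ρ {x | d x ≠ 0} ≤ 1 := prob_le_one
  have hinv_int : Integrable (fun x => ((d x)⁻¹).toReal) ν := by
    refine integrable_toReal_of_lintegral_ne_top (by fun_prop) ?_
    rw [hL]; exact (hLle.trans_lt ENNReal.one_lt_top).ne
  have hIinv : ∫ x, ((d x)⁻¹).toReal ∂ν = (ρ {x | d x ≠ 0}).toReal := by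
    rw [← hL, integral_toReal (by fun_prop)]
    filter_upwards [hpos] with x hx
    simp [ENNReal.inv_lt_top, hx]
  have hgint : Integrable (fun x => 1 - ((d x)⁻¹).toReal) ν :=
    (integrable_const 1).sub hinv_int
  set h : Ω → ℝ := fun x => llr ν ρ x - (1 - ((d x)⁻¹).toReal) with hh
  have hnonneg : 0 ≤ᵐ[ν] h := by
    filter_upwards [hpos, hlt] with x hx0 hxt
    have hg : 0 < (d x).toReal := ENNReal.toReal_pos hx0.ne' hxt.ne
    have := log_le_sub_one_of_pos (inv_pos.mpr hg)
    rw [log_inv] at this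
    simp only [hh, llr, Pi.zero_apply, ENNReal.toReal_inv]
    linarith
  have hhint : Integrable h ν := hint.sub hgint
  have hIh : ∫ x, h x ∂ν = (ρ {x | d x ≠ 0}).toReal - 1 := by
    simp only [hh]
    rw [integral_sub hint hgint, hzero, integral_sub (integrable_const 1) hinv_int, hIinv]
    simp
  have hIh_le : ∫ x, h x ∂ν ≤ 0 := by
    rw [hIh]
    have : (ρ {x | d x ≠ 0}).toReal ≤ 1 := by
      simpa using ENNReal.toReal_mono ENNReal.one_ne_top hLle
    linarith
  have hIh0 : ∫ x, h x ∂ν = 0 := le_antisymm hIh_le (integral_nonneg_of_ae hnonneg)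
  have hρ1 : ρ {x | d x ≠ 0} = 1 := by
    rw [← ENNReal.toReal_eq_one_iff]
    have := hIh0 ▸ hIh
    linarith [this]
  have hρ0 : ρ {x | d x = 0} = 0 := by
    have hcompl : {x | d x = 0} = {x | d x ≠ 0}ᶜ := by ext x; simp
    rw [hcompl, measure_compl hms (measure_ne_top _ _), hρ1, measure_univ, tsub_self]
  have hae0 : h =ᵐ[ν] 0 := (integral_eq_zero_iff_of_nonneg_ae hnonneg hhint).mp hIh0
  have hd1 : ∀ᵐ x ∂ν, d x = 1 := by
    filter_upwards [hae0, hpos, hlt] with x hx h0 ht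
    have hg : 0 < (d x).toReal := ENNReal.toReal_pos h0.ne' ht.ne
    by_contra hne
    have hgne : (d x).toReal ≠ 1 := fun hc => hne (by rwa [ENNReal.toReal_eq_one_iff] at hc)
    have hltr := log_lt_sub_one_of_pos (inv_pos.mpr hg) (by simpa using inv_ne_one.mpr hgne)
    rw [log_inv] at hltr
    simp only [hh, llr, Pi.zero_apply, ENNReal.toReal_inv] at hx
    linarith
  have hAms : MeasurableSet {x | d x ≠ 1} := (hdm (measurableSet_singleton 1)).compl
  have hA : ν {x | d x ≠ 1} = 0 := by
    have := ae_iff.mp hd1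
    simpa using this
  have hset : ∫⁻ x in {x | d x ≠ 1}, d x ∂ρ = 0 := by
    rw [← withDensity_apply d hAms, hwd]; exact hA
  have hzero_on : ∀ᵐ x ∂ρ, x ∈ {x | d x ≠ 1} → d x = 0 :=
    (setLIntegral_eq_zero_iff hAms hdm).mp hset
  have hdρ1 : d =ᵐ[ρ] 1 := by
    have hne0 : ∀ᵐ x ∂ρ, d x ≠ 0 := by
      rw [ae_iff]; simpa using hρ0
    filter_upwards [hzero_on, hne0] with x hx hx0
    by_contra hne
    exact hx0 (hx hne)
  rw [← hwd, withDensity_congr_ae hdρ1, withDensity_one]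

/-- Uniqueness of the minimizer: if a probability measure `ν ≪ μ` achieves the same value of the
functional `ν ↦ ∫ f dν + β·KL(ν‖μ)` as the Gibbs measure `ρ` with density `Z⁻¹ exp(−f/β)`
with respect to `μ`, then `ν = ρ`. -/
theorem gibbs_unique_minimizer {Ω : Type*} [MeasurableSpace Ω]
    (μ : Measure Ω) [IsProbabilityMeasure μ]
    (β : ℝ) (hβ : 0 < β)
    (f : Ω → ℝ) (hf : Measurable f) (C : ℝ) (hC : ∀ ω, |f ω| ≤ C)
    (Z : ℝ) (hZ : Z = ∫ ω, exp (-f ω / β) ∂μ)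
    (ρ : Measure Ω)
    (hρ : ρ = μ.withDensity fun ω => ENNReal.ofReal (Z⁻¹ * exp (-f ω / β)))
    (ν : Measure Ω) [IsProbabilityMeasure ν] (hν : ν ≪ μ)
    (heq : ((∫ ω, f ω ∂ν : ℝ) : EReal) + (β : EReal) * klDiv ν μ =
      ((∫ ω, f ω ∂ρ : ℝ) : EReal) + (β : EReal) * klDiv ρ μ) :
    ν = ρ := by
  set g₀ : Ω → ℝ := fun ω => -f ω / β with hg₀
  have hβne : β ≠ 0 := hβ.ne'
  have hg₀m : Measurable g₀ := (hf.neg).div_const β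
  -- boundedness of f and g₀, integrability of exp g₀
  have hbound : ∀ {m : Measure Ω}, IsProbabilityMeasure m → Integrable f m := by
    intro m hm
    exact (integrable_const C).mono' hf.aestronglyMeasurable
      (Filter.Eventually.of_forall fun x => by simpa using hC x)
  have hg₀bdd : ∀ {m : Measure Ω}, IsProbabilityMeasure m → Integrable g₀ m := by
    intro m hm
    refine (integrable_const (C / β)).mono' hg₀m.aestronglyMeasurable
      (Filter.Eventually.of_forall fun x => ?_)
    simp only [hg₀, norm_eq_abs, abs_div, abs_neg, abs_of_pos hβ]
    gcongr
    exact hC x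
  have hexp_int : Integrable (fun x => exp (g₀ x)) μ := by
    refine (integrable_const (exp (C / β))).mono' (hg₀m.exp).aestronglyMeasurable
      (Filter.Eventually.of_forall fun x => ?_)
    rw [norm_eq_abs, abs_of_pos (exp_pos _)]
    apply exp_le_exp.mpr
    simp only [hg₀]
    gcongr
    have := abs_le.mp (hC x)
    linarith
  have hZpos : 0 < Z := by rw [hZ]; exact integral_exp_pos hexp_int
  have hZint : Z = ∫ x, exp (g₀ x) ∂μ := hZ
  -- ρ is the tilted measure
  have hρt : ρ = μ.tilted g₀ := by
    rw [hρ, Measure.tilted, ← hZint]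
    congr 1
    ext x
    rw [inv_mul_eq_div]
  haveI hρprob : IsProbabilityMeasure ρ := by
    rw [hρt]; exact isProbabilityMeasure_tilted hexp_int
  have hρμ : ρ ≪ μ := hρt ▸ tilted_absolutelyContinuous μ g₀
  have hμρ : μ ≪ ρ := hρt ▸ absolutelyContinuous_tilted hexp_int
  -- llr ρ μ
  have hllrρ : llr ρ μ =ᵐ[μ] fun x => g₀ x - log Z := by
    rw [hρt, hZint]
    exact log_rnDeriv_tilted_left_self hexp_int
  have hllrρρ : llr ρ μ =ᵐ[ρ] fun x => g₀ x - log Z := hρμ.ae_le hllrρ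
  have hllrρ_int : Integrable (llr ρ μ) ρ :=
    ((hg₀bdd hρprob).sub (integrable_const (log Z))).congr hllrρρ.symm
  have hKρ : ∫ x, llr ρ μ x ∂ρ = ∫ x, g₀ x ∂ρ - log Z := by
    rw [integral_congr_ae hllrρρ, integral_sub (hg₀bdd hρprob) (integrable_const _)]
    simp
  have hklρ : klDiv ρ μ = ((∫ x, llr ρ μ x ∂ρ : ℝ) : EReal) :=
    if_pos ⟨hρμ, hllrρ_int⟩
  -- integral of g₀ over any probability measure
  have hg₀int : ∀ (m : Measure Ω), ∫ x, g₀ x ∂m = -(∫ x, f x ∂m) / β := by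
    intro m
    simp only [hg₀, neg_div]
    rw [integral_neg, integral_div]
  by_cases hint : Integrable (llr ν μ) ν
  · -- main case
    have hklν : klDiv ν μ = ((∫ x, llr ν μ x ∂ν : ℝ) : EReal) := if_pos ⟨hν, hint⟩
    rw [hklν, hklρ, ← EReal.coe_mul, ← EReal.coe_mul, ← EReal.coe_add, ← EReal.coe_add,
      EReal.coe_eq_coe_iff] at heq
    -- KL(ν‖ρ) computation
    have hI : ∫ x, llr ν ρ x ∂ν
        = ∫ x, llr ν μ x ∂ν - ∫ x, g₀ x ∂ν + log Z := by
      rw [hρt, integral_llr_tilted_right hν (hg₀bdd inferInstance) hexp_int hint, ← hZint]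
    have hIint : Integrable (llr ν ρ) ν := by
      rw [hρt]
      exact integrable_llr_tilted_right hν (hg₀bdd inferInstance) hint hexp_int
    -- show the integral is zero
    set a := ∫ x, f x ∂ν
    set c := ∫ x, f x ∂ρ
    set Kν := ∫ x, llr ν μ x ∂ν
    have hgν : ∫ x, g₀ x ∂ν = -a / β := hg₀int ν
    have hgρ : ∫ x, g₀ x ∂ρ = -c / β := hg₀int ρ
    have hI0 : ∫ x, llr ν ρ x ∂ν = 0 := by
      rw [hI, hgν]
      rw [hKρ, hgρ] at heq
      field_simp at heq ⊢
      linarith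
    exact eq_of_integral_llr_eq_zero ρ ν (hν.trans hμρ) hIint hI0
  · -- KL(ν‖μ) = ⊤, contradiction
    exfalso
    have hklν : klDiv ν μ = ⊤ := if_neg (fun h => hint h.2)
    rw [hklν, hklρ, EReal.coe_mul_top_of_pos hβ, EReal.coe_add_top,
      ← EReal.coe_mul, ← EReal.coe_add] at heq
    exact EReal.coe_ne_top _ heq.symm
end

section
/- Let L : ℝ^D → ℝ and ℓ : ℝ^D → ℝ be twice continuously differentiable, and let θ : (−δ, δ) → ℝ^D be a function differentiable at 0 satisfying the stationarity condition ∇L(θ(ε)) + ε·∇ℓ(θ(ε)) = 0 for all ε ∈ (−δ, δ). Assume the Hessian H = ∇²L(θ(0)) is invertible. Then the derivative of the perturbed minimizer satisfies θ′(0) = −H⁻¹ ∇ℓ(θ(0)). -/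
/-!
Differentiate the stationarity identity `∇L(θ ε) + ε • ∇ℓ(θ ε) = 0` at `ε = 0`: by the chain rule
and the product rule the derivative is `H θ'(0) + ∇ℓ(θ 0)`, and it vanishes because the identity
holds on a neighbourhood of `0`. Applying a left inverse of `H` gives `θ'(0) = -H⁻¹ ∇ℓ(θ 0)`.
-/

open Filter Topology

theorem ContDiff.differentiable_gradient {E : Type*} [NormedAddCommGroup E]
    [InnerProductSpace ℝ E] [CompleteSpace E] {f : E → ℝ} (hf : ContDiff ℝ 2 f) :
    Differentiable ℝ (gradient f) :=
  (InnerProductSpace.toDual ℝ E).symm.toContinuousLinearEquiv.differentiable.comp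
    ((hf.fderiv_right (m := 1) (by norm_num)).differentiable (by norm_num))

section Perturbation

variable {E F : Type*} [NormedAddCommGroup E] [NormedSpace ℝ E]
  [NormedAddCommGroup F] [NormedSpace ℝ F] {G g : E → F} {θ : ℝ → E}

theorem hasDerivAt_comp_add_smul_comp {d : E} (hG : DifferentiableAt ℝ G (θ 0))
    (hg : DifferentiableAt ℝ g (θ 0)) (hθ : HasDerivAt θ d 0) :
    HasDerivAt (fun ε => G (θ ε) + ε • g (θ ε)) (fderiv ℝ G (θ 0) d + g (θ 0)) 0 := by
  have hsmul := (hasDerivAt_id (0 : ℝ)).smul (hg.hasFDerivAt.comp_hasDerivAt 0 hθ)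
  simp only [id, zero_smul, one_smul, zero_add] at hsmul
  exact (hG.hasFDerivAt.comp_hasDerivAt 0 hθ).add hsmul

theorem deriv_eq_neg_of_comp_add_smul_comp_eq_zero (hG : DifferentiableAt ℝ G (θ 0))
    (hg : DifferentiableAt ℝ g (θ 0)) (hθ : DifferentiableAt ℝ θ 0)
    (hstat : ∀ᶠ ε in 𝓝 0, G (θ ε) + ε • g (θ ε) = 0) (Hinv : F →L[ℝ] E)
    (hHinv : Hinv.comp (fderiv ℝ G (θ 0)) = ContinuousLinearMap.id ℝ E) :
    deriv θ 0 = -Hinv (g (θ 0)) := by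
  have hderiv := hasDerivAt_comp_add_smul_comp hG hg hθ.hasDerivAt
  have hzero : fderiv ℝ G (θ 0) (deriv θ 0) + g (θ 0) = 0 := by
    have hstat' : (fun ε => G (θ ε) + ε • g (θ ε)) =ᶠ[𝓝 0] fun _ => 0 := hstat
    rw [← hderiv.deriv, hstat'.deriv_eq, deriv_const]
  calc deriv θ 0 = Hinv (fderiv ℝ G (θ 0) (deriv θ 0)) := by
        rw [← ContinuousLinearMap.comp_apply, hHinv, ContinuousLinearMap.id_apply]
    _ = -Hinv (g (θ 0)) := by rw [eq_neg_of_add_eq_zero_left hzero, map_neg]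

end Perturbation

theorem influence_function_general {D : ℕ}
    (L ℓ : EuclideanSpace ℝ (Fin D) → ℝ)
    (hL : ContDiff ℝ 2 L) (hℓ : ContDiff ℝ 2 ℓ)
    (δ : ℝ) (hδ : 0 < δ)
    (θ : ℝ → EuclideanSpace ℝ (Fin D))
    (hθ : DifferentiableAt ℝ θ 0)
    (hstat : ∀ ε ∈ Set.Ioo (-δ) δ, gradient L (θ ε) + ε • gradient ℓ (θ ε) = 0)
    (Hinv : EuclideanSpace ℝ (Fin D) →L[ℝ] EuclideanSpace ℝ (Fin D))
    (hHinv₁ : Hinv.comp (fderiv ℝ (gradient L) (θ 0)) = ContinuousLinearMap.id ℝ _) :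
    deriv θ 0 = -Hinv (gradient ℓ (θ 0)) :=
  deriv_eq_neg_of_comp_add_smul_comp_eq_zero (hL.differentiable_gradient _)
    (hℓ.differentiable_gradient _) hθ
    (eventually_of_mem (Ioo_mem_nhds (neg_neg_of_pos hδ) hδ) hstat) Hinv hHinv₁

/-- Influence function lemma (Cook): if `θ(ε)` is a differentiable-at-`0` curve of stationary
points of `L + ε·ℓ`, i.e. `∇L(θ(ε)) + ε·∇ℓ(θ(ε)) = 0` near `0`, with `L, ℓ` twice continuously
differentiable and the Hessian `H = ∇²L(θ(0))` invertible (with inverse `Hinv`), then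
`θ′(0) = −H⁻¹ ∇ℓ(θ(0))`. -/
theorem influence_function {D : ℕ}
    (L ℓ : EuclideanSpace ℝ (Fin D) → ℝ)
    (hL : ContDiff ℝ 2 L) (hℓ : ContDiff ℝ 2 ℓ)
    (δ : ℝ) (hδ : 0 < δ)
    (θ : ℝ → EuclideanSpace ℝ (Fin D))
    (hθ : DifferentiableAt ℝ θ 0)
    (hstat : ∀ ε ∈ Set.Ioo (-δ) δ, gradient L (θ ε) + ε • gradient ℓ (θ ε) = 0)
    (Hinv : EuclideanSpace ℝ (Fin D) →L[ℝ] EuclideanSpace ℝ (Fin D))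
    (hHinv₁ : Hinv.comp (fderiv ℝ (gradient L) (θ 0)) = ContinuousLinearMap.id ℝ _)
    (hHinv₂ : (fderiv ℝ (gradient L) (θ 0)).comp Hinv = ContinuousLinearMap.id ℝ _) :
    deriv θ 0 = -Hinv (gradient ℓ (θ 0)) :=
  influence_function_general L ℓ hL hℓ δ hδ θ hθ hstat Hinv hHinv₁
end
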